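/- arXiv:2602.01431 — 3 statements merged into one kernel-verified Lean document; each statement's English description precedes it below -/
import Mathlib

section
/- Let σ₀ > 1/3. If α ∈ ℝ is nonzero, then α·cosh(α) ≠ (1 + σ₀·α²)·sinh(α). Consequently, the only purely imaginary solution λ = iα of the dispersion relation λ·cos(λ) = (1 − σ₀·λ²)·sin(λ) is λ = 0. -/
open Real

lemma sinh_le_mul_cosh {x : ℝ} (hx : 0 ≤ x) : Real.sinh x ≤ x * Real.cosh x := by
  have hmono : MonotoneOn (fun x : ℝ => x * Real.cosh x - Real.sinh x) (Set.Ici 0) := by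
    apply monotoneOn_of_deriv_nonneg (convex_Ici 0)
    · exact (Continuous.mul continuous_id Real.continuous_cosh).sub Real.continuous_sinh |>.continuousOn
    · intro y hy
      exact (((differentiable_id.mul Real.differentiable_cosh).sub
        Real.differentiable_sinh) y).differentiableWithinAt
    · intro y hy
      have h : HasDerivAt (fun x : ℝ => x * Real.cosh x - Real.sinh x)
          (1 * Real.cosh y + y * Real.sinh y - Real.cosh y) y := by
        exact ((hasDerivAt_id y).mul (Real.hasDerivAt_cosh y)).sub (Real.hasDerivAt_sinh y)
      rw [h.deriv]
      have hy0 : 0 ≤ y := le_of_lt (by simpa using hy)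
      nlinarith [Real.sinh_nonneg_iff.mpr hy0]
  have := hmono (Set.self_mem_Ici) (Set.mem_Ici.mpr hx) hx
  simpa using this

lemma mul_cosh_le {x : ℝ} (hx : 0 ≤ x) :
    x * Real.cosh x ≤ (1 + x ^ 2 / 3) * Real.sinh x := by
  have hmono : MonotoneOn (fun x : ℝ => (1 + x ^ 2 / 3) * Real.sinh x - x * Real.cosh x)
      (Set.Ici 0) := by
    apply monotoneOn_of_deriv_nonneg (convex_Ici 0)
    · exact (((continuous_const.add ((continuous_id.pow 2).div_const 3)).mul
        Real.continuous_sinh).sub (Continuous.mul continuous_id Real.continuous_cosh)).continuousOn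
    · intro y hy
      exact ((((differentiable_const _).add ((differentiable_id.pow 2).div_const 3)).mul
        Real.differentiable_sinh |>.sub
        (differentiable_id.mul Real.differentiable_cosh)) y).differentiableWithinAt
    · intro y hy
      have h1 : HasDerivAt (fun x : ℝ => 1 + x ^ 2 / 3) (2 * y / 3) y := by
        have := ((hasDerivAt_pow 2 y).div_const 3).const_add 1
        simpa using this
      have h : HasDerivAt (fun x : ℝ => (1 + x ^ 2 / 3) * Real.sinh x - x * Real.cosh x)
          ((2 * y / 3) * Real.sinh y + (1 + y ^ 2 / 3) * Real.cosh y -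
            (1 * Real.cosh y + y * Real.sinh y)) y :=
        (h1.mul (Real.hasDerivAt_sinh y)).sub ((hasDerivAt_id y).mul (Real.hasDerivAt_cosh y))
      rw [h.deriv]
      have hy0 : 0 ≤ y := le_of_lt (by simpa using hy)
      have := sinh_le_mul_cosh hy0
      nlinarith
  have := hmono (Set.self_mem_Ici) (Set.mem_Ici.mpr hx) hx
  simp only [Real.sinh_zero, Real.cosh_zero] at this
  linarith

lemma real_part (σ₀ : ℝ) (hσ : σ₀ > 1 / 3) (α : ℝ) (hα : α ≠ 0) :
    α * Real.cosh α ≠ (1 + σ₀ * α ^ 2) * Real.sinh α := by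
  rcases hα.lt_or_gt with h | h
  · -- α < 0
    intro heq
    have hx : 0 ≤ -α := by linarith
    have h1 := mul_cosh_le hx
    have hs : 0 < Real.sinh (-α) := Real.sinh_pos_iff.mpr (by linarith)
    have h2 : (1 + (-α) ^ 2 / 3) * Real.sinh (-α) < (1 + σ₀ * (-α) ^ 2) * Real.sinh (-α) := by
      apply mul_lt_mul_of_pos_right _ hs
      nlinarith [sq_pos_of_ne_zero hα]
    rw [Real.sinh_neg] at h1 h2 hs
    rw [Real.cosh_neg] at h1
    nlinarith
  · intro heq
    have h1 := mul_cosh_le h.le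
    have hs : 0 < Real.sinh α := Real.sinh_pos_iff.mpr h
    have h2 : (1 + α ^ 2 / 3) * Real.sinh α < (1 + σ₀ * α ^ 2) * Real.sinh α := by
      apply mul_lt_mul_of_pos_right _ hs
      nlinarith [sq_pos_of_ne_zero hα]
    linarith

/-- For `σ₀ > 1/3`, no nonzero real `α` satisfies
`α·cosh α = (1 + σ₀ α²)·sinh α`; consequently the only purely imaginary
solution `λ = iα` of the dispersion relation
`λ·cos λ = (1 − σ₀ λ²)·sin λ` is `λ = 0`. -/
theorem dispersion_no_imaginary (σ₀ : ℝ) (hσ : σ₀ > 1 / 3) :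
    (∀ α : ℝ, α ≠ 0 → α * Real.cosh α ≠ (1 + σ₀ * α ^ 2) * Real.sinh α) ∧
    (∀ α : ℝ,
      (Complex.I * α) * Complex.cos (Complex.I * α)
        = (1 - (σ₀ : ℂ) * (Complex.I * α) ^ 2) * Complex.sin (Complex.I * α) →
      (Complex.I * (α : ℂ)) = 0) := by
  constructor
  · exact real_part σ₀ hσ
  · intro α heq
    by_contra hne
    have hα : α ≠ 0 := by
      intro h; apply hne; simp [h]
    apply real_part σ₀ hσ α hα
    rw [mul_comm Complex.I (α:ℂ), Complex.cos_mul_I, Complex.sin_mul_I] at heq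
    have hI2 : (Complex.I)^2 = -1 := Complex.I_sq
    have h2 : (α:ℂ) * Complex.cosh α = (1 + σ₀ * α^2) * Complex.sinh α := by
      linear_combination (-Complex.I) * heq +
        ((α:ℂ) * Complex.cosh α - Complex.sinh α +
          (σ₀:ℂ) * α^2 * Complex.sinh α * (Complex.I^2 - 1)) * hI2
    have h3 : ((α * Real.cosh α : ℝ) : ℂ) = (((1 + σ₀ * α ^ 2) * Real.sinh α : ℝ) : ℂ) := by
      push_cast
      exact h2
    exact_mod_cast h3
end

section
/- Let L be the linear map on quadruples (Φ,θ,Z,η) (Φ, θ functions on (0,1) with ∫₀¹Φ dy = 0, θ(0)=θ(1)=0, Z,η ∈ ℝ) given by L(Φ,θ,Z,η) = (θ' + (1/(2σ₀))(θ'(1)+η)(1/3−y²) + η(2y−1), −Φ' + 3(Φ(1)+Z)(1−y)y, −θ'(1)−η, 3(Φ(1)+Z)), with σ₀ > 1/3. If L(Φ,θ,Z,η) = 0, then (Φ,θ,Z,η) is a scalar multiple of (0, y(1−y), 0, 1); i.e., the kernel of L is one-dimensional. -/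
/-- Kernel of the linearized operator `L` is one-dimensional: if
`(Φ, θ, Z, η)` satisfies the zero-mean and Dirichlet conditions and
`L(Φ,θ,Z,η) = 0` on `[0,1]`, then it is a scalar multiple of
`(0, y(1−y), 0, 1)`. -/
theorem kernel_one_dimensional (σ₀ : ℝ) (hσ : σ₀ > 1 / 3)
    (Φ θ : ℝ → ℝ) (Z η : ℝ)
    (hΦ : ContDiff ℝ 2 Φ) (hθ : ContDiff ℝ 2 θ)
    (hmean : ∫ y in (0 : ℝ)..1, Φ y = 0)
    (hθ0 : θ 0 = 0) (hθ1 : θ 1 = 0)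
    (h1 : ∀ y ∈ Set.Icc (0 : ℝ) 1,
      deriv θ y + (1 / (2 * σ₀)) * (deriv θ 1 + η) * (1 / 3 - y ^ 2)
        + η * (2 * y - 1) = 0)
    (h2 : ∀ y ∈ Set.Icc (0 : ℝ) 1,
      -deriv Φ y + 3 * (Φ 1 + Z) * (1 - y) * y = 0)
    (h3 : -deriv θ 1 - η = 0)
    (h4 : 3 * (Φ 1 + Z) = 0) :
    ∃ c : ℝ, (∀ y ∈ Set.Icc (0 : ℝ) 1, Φ y = 0 ∧ θ y = c * (y * (1 - y)))
      ∧ Z = 0 ∧ η = c := by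
  have hΦZ : Φ 1 + Z = 0 := by linarith
  have hθ1' : deriv θ 1 + η = 0 := by linarith
  -- Φ is constant on [0,1]
  have hΦ' : ∀ y ∈ Set.Icc (0 : ℝ) 1, deriv Φ y = 0 := by
    intro y hy
    have := h2 y hy
    rw [hΦZ] at this
    linarith
  have hΦconst : ∀ y ∈ Set.Icc (0 : ℝ) 1, Φ y = Φ 0 := by
    have := eq_of_has_deriv_right_eq (f := Φ) (g := fun _ => Φ 0) (a := (0:ℝ)) (b := 1)
      (f' := fun _ => 0)
      (fun y hy => ((hΦ.differentiable (by norm_num)).differentiableAt.hasDerivAt.congr_deriv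
        (hΦ' y (Set.mem_Icc_of_Ico hy))).hasDerivWithinAt)
      (fun y hy => (hasDerivWithinAt_const _ _ _))
      (hΦ.continuous.continuousOn) continuousOn_const rfl
    exact this
  have hΦ0 : Φ 0 = 0 := by
    have : (∫ y in (0 : ℝ)..1, Φ y) = ∫ y in (0 : ℝ)..1, Φ 0 := by
      apply intervalIntegral.integral_congr
      intro y hy
      rw [Set.uIcc_of_le (by norm_num : (0:ℝ) ≤ 1)] at hy
      exact hΦconst y hy
    rw [this, intervalIntegral.integral_const] at hmean
    simpa using hmean
  have hΦzero : ∀ y ∈ Set.Icc (0 : ℝ) 1, Φ y = 0 := fun y hy => (hΦconst y hy).trans hΦ0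
  have hZ : Z = 0 := by
    have h1' := hΦzero 1 (by norm_num)
    linarith
  -- θ
  have hθ' : ∀ y ∈ Set.Icc (0 : ℝ) 1, deriv θ y = η * (1 - 2 * y) := by
    intro y hy
    have := h1 y hy
    rw [hθ1'] at this
    ring_nf at this ⊢
    linarith
  have hθeq : ∀ y ∈ Set.Icc (0 : ℝ) 1, θ y = η * (y * (1 - y)) := by
    have := eq_of_has_deriv_right_eq (f := θ) (g := fun y => η * (y * (1 - y))) (a := (0:ℝ)) (b := 1)
      (f' := fun y => η * (1 - 2 * y))
      (fun y hy => ((hθ.differentiable (by norm_num)).differentiableAt.hasDerivAt.congr_deriv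
        (hθ' y (Set.mem_Icc_of_Ico hy))).hasDerivWithinAt)
      (fun y hy => by
        have : HasDerivAt (fun y : ℝ => η * (y * (1 - y))) (η * (1 - 2 * y)) y := by
          have h : HasDerivAt (fun y : ℝ => η * (y * (1 - y))) (η * (1 * (1 - y) + y * (0 - 1))) y := ((hasDerivAt_id y).mul ((hasDerivAt_const y (1:ℝ)).sub (hasDerivAt_id y))).const_mul η
          convert h using 1
          ring
        exact this.hasDerivWithinAt)
      (hθ.continuous.continuousOn) (by fun_prop)
      (by simpa using hθ0)
    exact this
  exact ⟨η, fun y hy => ⟨hΦzero y hy, hθeq y hy⟩, hZ, rfl⟩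
end

section
/- Suppose f : ℝ³ → ℝ is C¹ near the origin with f(q,p,ε) = O(|p|·|(q,p,ε)|) + O(|(q,p)|·|(q,p,ε)|²) as (q,p,ε) → 0, and define for δ ≠ 0 small: g(Q,P,δ) = δ^{−8}·f(δ⁴·c·Q, δ⁶·P, δ⁴) where c > 0 is a constant, and g(Q,P,0) = 0. If moreover the partial derivatives of f satisfy ∂f/∂q = O(|p|) + O(|(q,ε)|²), ∂f/∂p = O(|(q,p,ε)|), ∂f/∂ε = O(|p|) + O(|(q,ε)|²), then g is C¹ in (Q,P,δ) on a neighborhood of any compact set in (Q,P) times an interval around δ = 0, with dg(Q,P,0) = 0. -/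
lemma norm3_eq (q p e : ℝ) : ‖((q,p,e) : ℝ × ℝ × ℝ)‖ = max |q| (max |p| |e|) := by
  simp [Prod.norm_def, Real.norm_eq_abs]

lemma norm2_eq (q p : ℝ) : ‖((q,p) : ℝ × ℝ)‖ = max |q| |p| := by
  simp [Prod.norm_def, Real.norm_eq_abs]

lemma opNorm3_le (L : ℝ × ℝ × ℝ →L[ℝ] ℝ) :
    ‖L‖ ≤ ‖L (1,0,0)‖ + ‖L (0,1,0)‖ + ‖L (0,0,1)‖ := by
  refine L.opNorm_le_bound (by positivity) fun u => ?_
  have hu : u = u.1 • ((1,0,0) : ℝ×ℝ×ℝ) + u.2.1 • ((0,1,0) : ℝ×ℝ×ℝ)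
      + u.2.2 • ((0,0,1) : ℝ×ℝ×ℝ) := by ext <;> simp
  have h1 : ‖u.1‖ ≤ ‖u‖ := norm_fst_le u
  have h2 : ‖u.2.1‖ ≤ ‖u‖ := (norm_fst_le u.2).trans (norm_snd_le u)
  have h3 : ‖u.2.2‖ ≤ ‖u‖ := (norm_snd_le u.2).trans (norm_snd_le u)
  calc ‖L u‖ = ‖u.1 • L (1,0,0) + u.2.1 • L (0,1,0) + u.2.2 • L (0,0,1)‖ := by
        conv_lhs => rw [hu]
        rw [map_add, map_add, map_smul, map_smul, map_smul]
    _ ≤ ‖u.1 • L (1,0,0)‖ + ‖u.2.1 • L (0,1,0)‖ + ‖u.2.2 • L (0,0,1)‖ := norm_add₃_le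
    _ = ‖u.1‖ * ‖L (1,0,0)‖ + ‖u.2.1‖ * ‖L (0,1,0)‖ + ‖u.2.2‖ * ‖L (0,0,1)‖ := by
        rw [norm_smul, norm_smul, norm_smul]
    _ ≤ ‖u‖ * ‖L (1,0,0)‖ + ‖u‖ * ‖L (0,1,0)‖ + ‖u‖ * ‖L (0,0,1)‖ := by gcongr
    _ = (‖L (1,0,0)‖ + ‖L (0,1,0)‖ + ‖L (0,0,1)‖) * ‖u‖ := by ring

lemma partial1_hasDerivAt (f : ℝ → ℝ → ℝ → ℝ) (q p e : ℝ)
    (hF : DifferentiableAt ℝ (fun v : ℝ × ℝ × ℝ => f v.1 v.2.1 v.2.2) ((q, p, e) : ℝ × ℝ × ℝ)) :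
    HasDerivAt (fun s => f s p e)
      (fderiv ℝ (fun v : ℝ × ℝ × ℝ => f v.1 v.2.1 v.2.2) ((q, p, e) : ℝ × ℝ × ℝ) (1, 0, 0)) q := by
  have hl : HasDerivAt (fun s : ℝ => ((s, p, e) : ℝ × ℝ × ℝ)) ((1, 0, 0) : ℝ × ℝ × ℝ) q :=
    (hasDerivAt_id q).prodMk ((hasDerivAt_const q p).prodMk (hasDerivAt_const q e))
  exact hF.hasFDerivAt.comp_hasDerivAt q hl

lemma partial2_hasDerivAt (f : ℝ → ℝ → ℝ → ℝ) (q p e : ℝ)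
    (hF : DifferentiableAt ℝ (fun v : ℝ × ℝ × ℝ => f v.1 v.2.1 v.2.2) ((q, p, e) : ℝ × ℝ × ℝ)) :
    HasDerivAt (fun s => f q s e)
      (fderiv ℝ (fun v : ℝ × ℝ × ℝ => f v.1 v.2.1 v.2.2) ((q, p, e) : ℝ × ℝ × ℝ) (0, 1, 0)) p := by
  have hl : HasDerivAt (fun s : ℝ => ((q, s, e) : ℝ × ℝ × ℝ)) ((0, 1, 0) : ℝ × ℝ × ℝ) p :=
    (hasDerivAt_const p q).prodMk ((hasDerivAt_id p).prodMk (hasDerivAt_const p e))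
  exact hF.hasFDerivAt.comp_hasDerivAt p hl

lemma partial3_hasDerivAt (f : ℝ → ℝ → ℝ → ℝ) (q p e : ℝ)
    (hF : DifferentiableAt ℝ (fun v : ℝ × ℝ × ℝ => f v.1 v.2.1 v.2.2) ((q, p, e) : ℝ × ℝ × ℝ)) :
    HasDerivAt (fun s => f q p s)
      (fderiv ℝ (fun v : ℝ × ℝ × ℝ => f v.1 v.2.1 v.2.2) ((q, p, e) : ℝ × ℝ × ℝ) (0, 0, 1)) e := by
  have hl : HasDerivAt (fun s : ℝ => ((q, p, s) : ℝ × ℝ × ℝ)) ((0, 0, 1) : ℝ × ℝ × ℝ) e :=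
    (hasDerivAt_const e q).prodMk ((hasDerivAt_const e p).prodMk (hasDerivAt_id e))
  exact hF.hasFDerivAt.comp_hasDerivAt e hl

lemma fderiv3_apply (f : ℝ → ℝ → ℝ → ℝ) (q p e : ℝ)
    (hF : DifferentiableAt ℝ (fun v : ℝ × ℝ × ℝ => f v.1 v.2.1 v.2.2) ((q, p, e) : ℝ × ℝ × ℝ))
    (u : ℝ × ℝ × ℝ) :
    fderiv ℝ (fun v : ℝ × ℝ × ℝ => f v.1 v.2.1 v.2.2) ((q, p, e) : ℝ × ℝ × ℝ) u
      = u.1 * deriv (fun s => f s p e) q + u.2.1 * deriv (fun s => f q s e) p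
        + u.2.2 * deriv (fun s => f q p s) e := by
  have h1 := (partial1_hasDerivAt f q p e hF).deriv
  have h2 := (partial2_hasDerivAt f q p e hF).deriv
  have h3 := (partial3_hasDerivAt f q p e hF).deriv
  rw [h1, h2, h3]
  have hu : u = u.1 • ((1, 0, 0) : ℝ × ℝ × ℝ) + u.2.1 • ((0, 1, 0) : ℝ × ℝ × ℝ)
      + u.2.2 • ((0, 0, 1) : ℝ × ℝ × ℝ) := by
    ext <;> simp
  rw [hu, map_add, map_add, map_smul, map_smul, map_smul]
  simp [smul_eq_mul]


set_option maxHeartbeats 2000000 in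
/-- Rescaling lemma for the remainder in the long-wave (KdV) limit.
Suppose `f` is `C¹` near the origin with
`f(q,p,ε) = O(|p|·|(q,p,ε)|) + O(|(q,p)|·|(q,p,ε)|²)` and partial-derivative
bounds `∂f/∂q = O(|p|) + O(|(q,ε)|²)`, `∂f/∂p = O(|(q,p,ε)|)`,
`∂f/∂ε = O(|p|) + O(|(q,ε)|²)`.  Define, for a constant `c > 0`,
`g(Q,P,δ) = δ⁻⁸ f(δ⁴ c Q, δ⁶ P, δ⁴)` for `δ ≠ 0` and `g(Q,P,0) = 0`.
Then on every region `|Q| ≤ M`, `|P| ≤ M` there is `δ₀ > 0` such that `g` is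
`C¹` there for `|δ| < δ₀`, with vanishing derivative at `δ = 0`. -/
theorem rescaling_C1 (f : ℝ → ℝ → ℝ → ℝ) (c : ℝ) (hc : c > 0)
    (hC1 : ∃ ε₀ > (0 : ℝ), ContDiffOn ℝ 1
      (fun v : ℝ × ℝ × ℝ => f v.1 v.2.1 v.2.2) (Metric.ball (0 : ℝ × ℝ × ℝ) ε₀))
    (hsize : ∃ C > (0 : ℝ), ∃ ε₀ > (0 : ℝ), ∀ q p e : ℝ,
      ‖((q, p, e) : ℝ × ℝ × ℝ)‖ < ε₀ →
      |f q p e| ≤ C * (|p| * ‖((q, p, e) : ℝ × ℝ × ℝ)‖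
        + ‖((q, p) : ℝ × ℝ)‖ * ‖((q, p, e) : ℝ × ℝ × ℝ)‖ ^ 2))
    (hdq : ∃ C > (0 : ℝ), ∃ ε₀ > (0 : ℝ), ∀ q p e : ℝ,
      ‖((q, p, e) : ℝ × ℝ × ℝ)‖ < ε₀ →
      |deriv (fun s => f s p e) q| ≤ C * (|p| + ‖((q, e) : ℝ × ℝ)‖ ^ 2))
    (hdp : ∃ C > (0 : ℝ), ∃ ε₀ > (0 : ℝ), ∀ q p e : ℝ,
      ‖((q, p, e) : ℝ × ℝ × ℝ)‖ < ε₀ →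
      |deriv (fun s => f q s e) p| ≤ C * ‖((q, p, e) : ℝ × ℝ × ℝ)‖)
    (hde : ∃ C > (0 : ℝ), ∃ ε₀ > (0 : ℝ), ∀ q p e : ℝ,
      ‖((q, p, e) : ℝ × ℝ × ℝ)‖ < ε₀ →
      |deriv (fun s => f q p s) e| ≤ C * (|p| + ‖((q, e) : ℝ × ℝ)‖ ^ 2))
    (g : ℝ × ℝ × ℝ → ℝ)
    (hg : ∀ Q P δ : ℝ, δ ≠ 0 →
      g (Q, P, δ) = (δ ^ 8)⁻¹ * f (δ ^ 4 * c * Q) (δ ^ 6 * P) (δ ^ 4))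
    (hg0 : ∀ Q P : ℝ, g (Q, P, 0) = 0) :
    ∀ M > (0 : ℝ), ∃ δ₀ > (0 : ℝ),
      ContDiffOn ℝ 1 g
        (Set.Icc (-M) M ×ˢ Set.Icc (-M) M ×ˢ Set.Ioo (-δ₀) δ₀) ∧
      ∀ Q P : ℝ, |Q| ≤ M → |P| ≤ M → fderiv ℝ g (Q, P, 0) = 0 := by
  obtain ⟨εf, hεf, hf1⟩ := hC1
  obtain ⟨Cs, hCs, εs, hεs, hS⟩ := hsize
  obtain ⟨Cq, hCq, εq, hεq, hDq⟩ := hdq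
  obtain ⟨Cp, hCp, εp, hεp, hDp⟩ := hdp
  obtain ⟨Ce, hCe, εe, hεe, hDe⟩ := hde
  intro M hM
  set B : ℝ := M + 1 with hBdef
  have hB0 : 0 < B := by simp only [hBdef]; linarith
  have hB1 : 1 ≤ B := by simp only [hBdef]; linarith
  set K : ℝ := max (c*B) (max B 1) with hKdef
  have hK1 : 1 ≤ K := le_max_of_le_right (le_max_right _ _)
  have hK0 : 0 < K := lt_of_lt_of_le one_pos hK1
  have hKcB : c*B ≤ K := le_max_left _ _
  have hKB : B ≤ K := le_max_of_le_right (le_max_left _ _)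
  set εm : ℝ := min εf (min εs (min εq (min εp εe))) with hεmdef
  have hεm0 : 0 < εm := lt_min hεf (lt_min hεs (lt_min hεq (lt_min hεp hεe)))
  set δ₀ : ℝ := min 1 (εm/(2*K)) with hδ₀def
  have hδ₀0 : 0 < δ₀ := lt_min one_pos (by positivity)
  have hδ₀1 : δ₀ ≤ 1 := min_le_left _ _
  have hδ₀K : K * δ₀ < εm := by
    calc K * δ₀ ≤ K * (εm/(2*K)) := by
          exact mul_le_mul_of_nonneg_left (min_le_right _ _) hK0.le
      _ = εm/2 := by field_simp
      _ < εm := by linarith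
  -- constants
  set CC : ℝ := Cs*(B*K + K^3) with hCCdef
  have hCC0 : 0 < CC := by positivity
  set D : ℝ := B + K^2 with hDdef
  have hD0 : 0 < D := by positivity
  set KK : ℝ := c*Cq*D + Cp*K + (8*CC + 4*c*B*Cq*D + 6*B*Cp*K + 4*Ce*D) with hKKdef
  have hKK0 : 0 < KK := by positivity
  -- basic norm estimates
  have hzle : ∀ Q P δ : ℝ, |Q| ≤ B → |P| ≤ B → |δ| < δ₀ →
      ‖((δ^4*c*Q, δ^6*P, δ^4) : ℝ×ℝ×ℝ)‖ ≤ K * |δ|^4 := by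
    intro Q P δ hQb hPb hδb
    have ha1 : |δ| ≤ 1 := hδb.le.trans hδ₀1
    have ha0 : (0:ℝ) ≤ |δ| := abs_nonneg δ
    have h64 : |δ|^6 ≤ |δ|^4 := pow_le_pow_of_le_one ha0 ha1 (by norm_num)
    rw [norm3_eq]
    refine max_le ?_ (max_le ?_ ?_)
    · rw [abs_mul, abs_mul, abs_pow, abs_of_pos hc]
      calc |δ|^4*c*|Q| ≤ |δ|^4*c*B := by gcongr
        _ = c*B*|δ|^4 := by ring
        _ ≤ K*|δ|^4 := by gcongr
    · rw [abs_mul, abs_pow]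
      calc |δ|^6*|P| ≤ |δ|^4*B := mul_le_mul h64 hPb (abs_nonneg P) (by positivity)
        _ ≤ |δ|^4*K := by gcongr
        _ = K*|δ|^4 := by ring
    · rw [abs_pow]
      nlinarith [pow_nonneg ha0 4]
  have hzεm : ∀ Q P δ : ℝ, |Q| ≤ B → |P| ≤ B → |δ| < δ₀ → δ ≠ 0 →
      ‖((δ^4*c*Q, δ^6*P, δ^4) : ℝ×ℝ×ℝ)‖ < εm := by
    intro Q P δ hQb hPb hδb hδ
    have ha1 : |δ| ≤ 1 := hδb.le.trans hδ₀1
    have ha0 : (0:ℝ) < |δ| := abs_pos.2 hδ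
    calc ‖((δ^4*c*Q, δ^6*P, δ^4) : ℝ×ℝ×ℝ)‖ ≤ K * |δ|^4 := hzle Q P δ hQb hPb hδb
      _ ≤ K * |δ| := by
          have : |δ|^4 ≤ |δ| := pow_le_of_le_one ha0.le ha1 (by norm_num)
          exact mul_le_mul_of_nonneg_left this hK0.le
      _ < K * δ₀ := by exact mul_lt_mul_of_pos_left hδb hK0
      _ < εm := hδ₀K
  have h2le3a : ∀ q p e : ℝ, ‖((q,p) : ℝ×ℝ)‖ ≤ ‖((q,p,e) : ℝ×ℝ×ℝ)‖ := by
    intro q p e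
    rw [norm2_eq, norm3_eq]
    exact max_le (le_max_left _ _) (le_max_of_le_right (le_max_left _ _))
  have h2le3b : ∀ q p e : ℝ, ‖((q,e) : ℝ×ℝ)‖ ≤ ‖((q,p,e) : ℝ×ℝ×ℝ)‖ := by
    intro q p e
    rw [norm2_eq, norm3_eq]
    exact max_le (le_max_left _ _) (le_max_of_le_right (le_max_right _ _))
  have hpb : ∀ P δ : ℝ, |P| ≤ B → |δ| ≤ 1 → |δ^6*P| ≤ B*|δ|^6 := by
    intro P δ hPb _
    rw [abs_mul, abs_pow]
    calc |δ|^6*|P| ≤ |δ|^6*B := by gcongr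
      _ = B*|δ|^6 := by ring
  -- size bounds at the rescaled point
  have hfzb : ∀ Q P δ : ℝ, |Q| ≤ B → |P| ≤ B → |δ| < δ₀ → δ ≠ 0 →
      |f (δ^4*c*Q) (δ^6*P) (δ^4)| ≤ CC*|δ|^10 := by
    intro Q P δ hQb hPb hδb hδ
    have ha1 : |δ| ≤ 1 := hδb.le.trans hδ₀1
    have ha0 : (0:ℝ) ≤ |δ| := abs_nonneg δ
    have hz := hzle Q P δ hQb hPb hδb
    have hzs : ‖((δ^4*c*Q, δ^6*P, δ^4) : ℝ×ℝ×ℝ)‖ < εs :=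
      lt_of_lt_of_le (hzεm Q P δ hQb hPb hδb hδ)
        ((min_le_right _ _).trans (min_le_left _ _))
    have h := hS (δ^4*c*Q) (δ^6*P) (δ^4) hzs
    have hqp : ‖((δ^4*c*Q, δ^6*P) : ℝ×ℝ)‖ ≤ K*|δ|^4 := (h2le3a _ _ _).trans hz
    have hp6 : |δ^6*P| ≤ B*|δ|^6 := hpb P δ hPb ha1
    have h12 : |δ|^12 ≤ |δ|^10 := pow_le_pow_of_le_one ha0 ha1 (by norm_num)
    calc |f (δ^4*c*Q) (δ^6*P) (δ^4)|
        ≤ Cs * (|δ^6*P| * ‖((δ^4*c*Q, δ^6*P, δ^4) : ℝ×ℝ×ℝ)‖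
            + ‖((δ^4*c*Q, δ^6*P) : ℝ×ℝ)‖ * ‖((δ^4*c*Q, δ^6*P, δ^4) : ℝ×ℝ×ℝ)‖^2) := h
      _ ≤ Cs * ((B*|δ|^6) * (K*|δ|^4) + (K*|δ|^4) * (K*|δ|^4)^2) := by
          have h1 : |δ^6*P| * ‖((δ^4*c*Q, δ^6*P, δ^4) : ℝ×ℝ×ℝ)‖ ≤ (B*|δ|^6) * (K*|δ|^4) :=
            mul_le_mul hp6 hz (norm_nonneg _) (by positivity)
          have h2 : ‖((δ^4*c*Q, δ^6*P) : ℝ×ℝ)‖ * ‖((δ^4*c*Q, δ^6*P, δ^4) : ℝ×ℝ×ℝ)‖^2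
              ≤ (K*|δ|^4) * (K*|δ|^4)^2 :=
            mul_le_mul hqp (pow_le_pow_left₀ (norm_nonneg _) hz 2) (by positivity) (by positivity)
          exact mul_le_mul_of_nonneg_left (add_le_add h1 h2) hCs.le
      _ = Cs * (B*K*|δ|^10 + K^3*|δ|^12) := by ring
      _ ≤ Cs * (B*K*|δ|^10 + K^3*|δ|^10) := by gcongr
      _ = CC*|δ|^10 := by rw [hCCdef]; ring
  have hd1b : ∀ Q P δ : ℝ, |Q| ≤ B → |P| ≤ B → |δ| < δ₀ → δ ≠ 0 →
      |deriv (fun s => f s (δ^6*P) (δ^4)) (δ^4*c*Q)| ≤ Cq*D*|δ|^6 := by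
    intro Q P δ hQb hPb hδb hδ
    have ha1 : |δ| ≤ 1 := hδb.le.trans hδ₀1
    have ha0 : (0:ℝ) ≤ |δ| := abs_nonneg δ
    have hz := hzle Q P δ hQb hPb hδb
    have hzq : ‖((δ^4*c*Q, δ^6*P, δ^4) : ℝ×ℝ×ℝ)‖ < εq :=
      lt_of_lt_of_le (hzεm Q P δ hQb hPb hδb hδ)
        ((min_le_right _ _).trans ((min_le_right _ _).trans (min_le_left _ _)))
    have h := hDq (δ^4*c*Q) (δ^6*P) (δ^4) hzq
    have hqe : ‖((δ^4*c*Q, δ^4) : ℝ×ℝ)‖ ≤ K*|δ|^4 := (h2le3b _ _ _).trans hz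
    have hp6 : |δ^6*P| ≤ B*|δ|^6 := hpb P δ hPb ha1
    have h86 : |δ|^8 ≤ |δ|^6 := pow_le_pow_of_le_one ha0 ha1 (by norm_num)
    calc |deriv (fun s => f s (δ^6*P) (δ^4)) (δ^4*c*Q)|
        ≤ Cq * (|δ^6*P| + ‖((δ^4*c*Q, δ^4) : ℝ×ℝ)‖^2) := h
      _ ≤ Cq * (B*|δ|^6 + (K*|δ|^4)^2) := by gcongr
      _ = Cq * (B*|δ|^6 + K^2*|δ|^8) := by ring
      _ ≤ Cq * (B*|δ|^6 + K^2*|δ|^6) := by gcongr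
      _ = Cq*D*|δ|^6 := by rw [hDdef]; ring
  have hd3b : ∀ Q P δ : ℝ, |Q| ≤ B → |P| ≤ B → |δ| < δ₀ → δ ≠ 0 →
      |deriv (fun s => f (δ^4*c*Q) (δ^6*P) s) (δ^4)| ≤ Ce*D*|δ|^6 := by
    intro Q P δ hQb hPb hδb hδ
    have ha1 : |δ| ≤ 1 := hδb.le.trans hδ₀1
    have ha0 : (0:ℝ) ≤ |δ| := abs_nonneg δ
    have hz := hzle Q P δ hQb hPb hδb
    have hze : ‖((δ^4*c*Q, δ^6*P, δ^4) : ℝ×ℝ×ℝ)‖ < εe :=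
      lt_of_lt_of_le (hzεm Q P δ hQb hPb hδb hδ)
        ((min_le_right _ _).trans ((min_le_right _ _).trans
          ((min_le_right _ _).trans (min_le_right _ _))))
    have h := hDe (δ^4*c*Q) (δ^6*P) (δ^4) hze
    have hqe : ‖((δ^4*c*Q, δ^4) : ℝ×ℝ)‖ ≤ K*|δ|^4 := (h2le3b _ _ _).trans hz
    have hp6 : |δ^6*P| ≤ B*|δ|^6 := hpb P δ hPb ha1
    have h86 : |δ|^8 ≤ |δ|^6 := pow_le_pow_of_le_one ha0 ha1 (by norm_num)
    calc |deriv (fun s => f (δ^4*c*Q) (δ^6*P) s) (δ^4)|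
        ≤ Ce * (|δ^6*P| + ‖((δ^4*c*Q, δ^4) : ℝ×ℝ)‖^2) := h
      _ ≤ Ce * (B*|δ|^6 + (K*|δ|^4)^2) := by gcongr
      _ = Ce * (B*|δ|^6 + K^2*|δ|^8) := by ring
      _ ≤ Ce * (B*|δ|^6 + K^2*|δ|^6) := by gcongr
      _ = Ce*D*|δ|^6 := by rw [hDdef]; ring
  have hd2b : ∀ Q P δ : ℝ, |Q| ≤ B → |P| ≤ B → |δ| < δ₀ → δ ≠ 0 →
      |deriv (fun s => f (δ^4*c*Q) s (δ^4)) (δ^6*P)| ≤ Cp*K*|δ|^4 := by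
    intro Q P δ hQb hPb hδb hδ
    have hz := hzle Q P δ hQb hPb hδb
    have hzp : ‖((δ^4*c*Q, δ^6*P, δ^4) : ℝ×ℝ×ℝ)‖ < εp :=
      lt_of_lt_of_le (hzεm Q P δ hQb hPb hδb hδ)
        ((min_le_right _ _).trans ((min_le_right _ _).trans
          ((min_le_right _ _).trans (min_le_left _ _))))
    have h := hDp (δ^4*c*Q) (δ^6*P) (δ^4) hzp
    calc |deriv (fun s => f (δ^4*c*Q) s (δ^4)) (δ^6*P)|
        ≤ Cp * ‖((δ^4*c*Q, δ^6*P, δ^4) : ℝ×ℝ×ℝ)‖ := h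
      _ ≤ Cp * (K*|δ|^4) := by gcongr
      _ = Cp*K*|δ|^4 := by ring
  have hFdiff : ∀ Q P δ : ℝ, |Q| ≤ B → |P| ≤ B → |δ| < δ₀ → δ ≠ 0 →
      DifferentiableAt ℝ (fun v : ℝ × ℝ × ℝ => f v.1 v.2.1 v.2.2)
        ((δ^4*c*Q, δ^6*P, δ^4) : ℝ×ℝ×ℝ) := by
    intro Q P δ hQb hPb hδb hδ
    have hz : ((δ^4*c*Q, δ^6*P, δ^4) : ℝ×ℝ×ℝ) ∈ Metric.ball (0 : ℝ×ℝ×ℝ) εf := by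
      rw [Metric.mem_ball, dist_zero_right]
      exact lt_of_lt_of_le (hzεm Q P δ hQb hPb hδb hδ) (min_le_left _ _)
    exact ((hf1.differentiableOn one_ne_zero) _ hz).differentiableAt
      (Metric.isOpen_ball.mem_nhds hz)
  -- the open sets
  set U : Set (ℝ×ℝ×ℝ) :=
    Set.Ioo (-B) B ×ˢ Set.Ioo (-B) B ×ˢ Set.Ioo (-δ₀) δ₀ with hUdef
  have hUopen : IsOpen U := isOpen_Ioo.prod (isOpen_Ioo.prod isOpen_Ioo)
  have hmemU : ∀ y : ℝ×ℝ×ℝ, y ∈ U → |y.1| ≤ B ∧ |y.2.1| ≤ B ∧ |y.2.2| < δ₀ := by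
    intro y hy
    obtain ⟨h1, h2, h3⟩ := hy
    exact ⟨(abs_lt.2 ⟨h1.1, h1.2⟩).le, (abs_lt.2 ⟨h2.1, h2.2⟩).le, abs_lt.2 ⟨h3.1, h3.2⟩⟩
  -- global size bound for g
  have gbound : ∀ y ∈ U, |g y| ≤ CC * y.2.2^2 := by
    rintro ⟨Q, P, δ⟩ hy
    obtain ⟨hQb, hPb, hδb⟩ := hmemU _ hy
    by_cases hδ : δ = 0
    · subst hδ
      rw [show g (Q, P, 0) = 0 from hg0 Q P]
      simp
    · rw [hg Q P δ hδ]
      have hfz := hfzb Q P δ hQb hPb hδb hδ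
      have ha0 : (0:ℝ) < |δ| := abs_pos.2 hδ
      rw [abs_mul, abs_inv, abs_pow]
      rw [inv_mul_le_iff₀ (by positivity)]
      calc |f (δ^4*c*Q) (δ^6*P) (δ^4)| ≤ CC*|δ|^10 := hfz
        _ = |δ|^8 * (CC * |δ|^2) := by ring
        _ = |δ|^8 * (CC * δ^2) := by rw [sq_abs]
  -- derivative of g vanishes where δ = 0
  have hd0 : ∀ y ∈ U, y.2.2 = 0 → HasFDerivAt g (0 : ℝ×ℝ×ℝ →L[ℝ] ℝ) y := by
    intro y hyU hy0
    have hgy : g y = 0 := by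
      have hyeq : y = (y.1, y.2.1, (0:ℝ)) := by rw [← hy0]
      rw [hyeq]; exact hg0 _ _
    refine HasFDerivAt.of_isLittleO ?_
    rw [Asymptotics.isLittleO_iff]
    intro r hr
    filter_upwards [hUopen.mem_nhds hyU, Metric.ball_mem_nhds y (div_pos hr hCC0)]
      with x hxU hxb
    have hx2 : |x.2.2| ≤ ‖x - y‖ := by
      have h1 : |x.2.2| = |(x - y).2.2| := by
        rw [show (x - y).2.2 = x.2.2 - y.2.2 from rfl, hy0, sub_zero]
      rw [h1, ← Real.norm_eq_abs]
      exact (norm_snd_le (x-y).2).trans (norm_snd_le (x-y))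
    have hx2' : |x.2.2| < r/CC := by
      rw [Metric.mem_ball, dist_eq_norm] at hxb
      exact lt_of_le_of_lt hx2 hxb
    calc ‖g x - g y - (0 : ℝ×ℝ×ℝ →L[ℝ] ℝ) (x - y)‖ = |g x| := by
          rw [hgy]; simp [Real.norm_eq_abs]
      _ ≤ CC * x.2.2^2 := gbound x hxU
      _ = CC * |x.2.2| * |x.2.2| := by rw [← sq_abs]; ring
      _ ≤ CC * (r/CC) * ‖x - y‖ :=
          mul_le_mul (mul_le_mul_of_nonneg_left hx2'.le hCC0.le) hx2 (abs_nonneg _)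
            (mul_nonneg hCC0.le (div_nonneg hr.le hCC0.le))
      _ = r * ‖x - y‖ := by
          rw [mul_div_assoc', mul_comm CC r, mul_div_assoc, div_self hCC0.ne', mul_one]
  -- g is C¹ away from δ = 0
  set V : Set (ℝ×ℝ×ℝ) := U ∩ {y : ℝ×ℝ×ℝ | y.2.2 ≠ 0} with hVdef
  have hVopen : IsOpen V :=
    hUopen.inter (isOpen_ne.preimage (continuous_snd.comp continuous_snd))
  have hgV : ContDiffOn ℝ 1 g V := by
    have hφ : ContDiff ℝ 1
        (fun v : ℝ×ℝ×ℝ => ((v.2.2^4*c*v.1, v.2.2^6*v.2.1, v.2.2^4) : ℝ×ℝ×ℝ)) := by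
      fun_prop
    have hmaps : Set.MapsTo
        (fun v : ℝ×ℝ×ℝ => ((v.2.2^4*c*v.1, v.2.2^6*v.2.1, v.2.2^4) : ℝ×ℝ×ℝ)) V
        (Metric.ball (0 : ℝ×ℝ×ℝ) εf) := by
      rintro ⟨Q, P, δ⟩ ⟨hyU, hδ⟩
      obtain ⟨hQb, hPb, hδb⟩ := hmemU _ hyU
      rw [Set.mem_setOf_eq] at hδ
      rw [Metric.mem_ball, dist_zero_right]
      exact lt_of_lt_of_le (hzεm Q P δ hQb hPb hδb hδ) (min_le_left _ _)
    have hA : ContDiffOn ℝ 1 (fun v : ℝ×ℝ×ℝ => (v.2.2^8)⁻¹) V := by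
      refine ContDiffOn.inv ?_ (fun v hv => pow_ne_zero 8 hv.2)
      exact (by fun_prop : ContDiff ℝ 1 (fun v : ℝ×ℝ×ℝ => v.2.2^8)).contDiffOn
    have hB' : ContDiffOn ℝ 1
        (fun v : ℝ×ℝ×ℝ => f (v.2.2^4*c*v.1) (v.2.2^6*v.2.1) (v.2.2^4)) V :=
      hf1.comp hφ.contDiffOn hmaps
    have hGm : ContDiffOn ℝ 1
        (fun v : ℝ×ℝ×ℝ => (v.2.2^8)⁻¹ * f (v.2.2^4*c*v.1) (v.2.2^6*v.2.1) (v.2.2^4)) V :=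
      hA.mul hB'
    refine hGm.congr ?_
    rintro ⟨Q, P, δ⟩ ⟨hyU, hδ⟩
    exact hg Q P δ hδ
  have hgVdiff : ∀ y ∈ V, DifferentiableAt ℝ g y := fun y hy =>
    ((hgV.differentiableOn one_ne_zero) y hy).differentiableAt (hVopen.mem_nhds hy)
  -- bound on the derivative of g away from δ = 0
  have hLbound : ∀ y ∈ V, ‖fderiv ℝ g y‖ ≤ KK * |y.2.2| := by
    rintro ⟨Q, P, δ⟩ ⟨hyU, hδ'⟩
    have hδ : δ ≠ 0 := hδ'
    obtain ⟨hQb, hPb, hδb⟩ := hmemU _ hyU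
    have ha0 : (0:ℝ) < |δ| := abs_pos.2 hδ
    have ha1 : |δ| ≤ 1 := hδb.le.trans hδ₀1
    have hF := hFdiff Q P δ hQb hPb hδb hδ
    set d₁ := deriv (fun s => f s (δ^6*P) (δ^4)) (δ^4*c*Q) with hd₁def
    set d₂ := deriv (fun s => f (δ^4*c*Q) s (δ^4)) (δ^6*P) with hd₂def
    set d₃ := deriv (fun s => f (δ^4*c*Q) (δ^6*P) s) (δ^4) with hd₃def
    have hD1 : HasDerivAt (fun s => f s (δ^6*P) (δ^4)) d₁ (δ^4*c*Q) :=
      (partial1_hasDerivAt f _ _ _ hF).differentiableAt.hasDerivAt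
    have hD2 : HasDerivAt (fun s => f (δ^4*c*Q) s (δ^4)) d₂ (δ^6*P) :=
      (partial2_hasDerivAt f _ _ _ hF).differentiableAt.hasDerivAt
    have hgdiff : DifferentiableAt ℝ g (Q, P, δ) := hgVdiff (Q,P,δ) ⟨hyU, hδ'⟩
    set L := fderiv ℝ g (Q, P, δ) with hLdef
    have hLg : HasFDerivAt g L (Q, P, δ) := hgdiff.hasFDerivAt
    -- direction 1
    have hl1 : HasDerivAt (fun t : ℝ => ((t, P, δ) : ℝ×ℝ×ℝ)) ((1,0,0) : ℝ×ℝ×ℝ) Q :=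
      (hasDerivAt_id Q).prodMk ((hasDerivAt_const Q P).prodMk (hasDerivAt_const Q δ))
    have hc1 : HasDerivAt (fun t => g (t, P, δ)) (L (1,0,0)) Q := hLg.comp_hasDerivAt Q hl1
    have hinner1 : HasDerivAt (fun t : ℝ => δ^4*c*t) (δ^4*c) Q := by
      simpa using (hasDerivAt_id Q).const_mul (δ^4*c)
    have hx1 : HasDerivAt (fun t => (δ^8)⁻¹ * f (δ^4*c*t) (δ^6*P) (δ^4))
        ((δ^8)⁻¹ * (d₁ * (δ^4*c))) Q := (hD1.comp Q hinner1).const_mul _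
    have heq1 : (fun t => g (t, P, δ))
        = fun t => (δ^8)⁻¹ * f (δ^4*c*t) (δ^6*P) (δ^4) := funext fun t => hg t P δ hδ
    have ht1 : L (1,0,0) = (δ^8)⁻¹ * (d₁ * (δ^4*c)) := hc1.unique (heq1 ▸ hx1)
    -- direction 2
    have hl2 : HasDerivAt (fun t : ℝ => ((Q, t, δ) : ℝ×ℝ×ℝ)) ((0,1,0) : ℝ×ℝ×ℝ) P :=
      (hasDerivAt_const P Q).prodMk ((hasDerivAt_id P).prodMk (hasDerivAt_const P δ))
    have hc2 : HasDerivAt (fun t => g (Q, t, δ)) (L (0,1,0)) P := hLg.comp_hasDerivAt P hl2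
    have hinner2 : HasDerivAt (fun t : ℝ => δ^6*t) (δ^6) P := by
      simpa using (hasDerivAt_id P).const_mul (δ^6)
    have hx2 : HasDerivAt (fun t => (δ^8)⁻¹ * f (δ^4*c*Q) (δ^6*t) (δ^4))
        ((δ^8)⁻¹ * (d₂ * δ^6)) P := (hD2.comp P hinner2).const_mul _
    have heq2 : (fun t => g (Q, t, δ))
        = fun t => (δ^8)⁻¹ * f (δ^4*c*Q) (δ^6*t) (δ^4) := funext fun t => hg Q t δ hδ
    have ht2 : L (0,1,0) = (δ^8)⁻¹ * (d₂ * δ^6) := hc2.unique (heq2 ▸ hx2)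
    -- direction 3
    have hl3 : HasDerivAt (fun t : ℝ => ((Q, P, t) : ℝ×ℝ×ℝ)) ((0,0,1) : ℝ×ℝ×ℝ) δ :=
      (hasDerivAt_const δ Q).prodMk ((hasDerivAt_const δ P).prodMk (hasDerivAt_id δ))
    have hc3 : HasDerivAt (fun t => g (Q, P, t)) (L (0,0,1)) δ := hLg.comp_hasDerivAt δ hl3
    have hψ1 : HasDerivAt (fun s : ℝ => s^4*c*Q) (4*δ^3*c*Q) δ := by
      simpa using ((hasDerivAt_pow 4 δ).mul_const c).mul_const Q
    have hψ2 : HasDerivAt (fun s : ℝ => s^6*P) (6*δ^5*P) δ := by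
      simpa using (hasDerivAt_pow 6 δ).mul_const P
    have hψ3 : HasDerivAt (fun s : ℝ => s^4) (4*δ^3) δ := by
      simpa using hasDerivAt_pow 4 δ
    have hψ : HasDerivAt (fun s : ℝ => ((s^4*c*Q, s^6*P, s^4) : ℝ×ℝ×ℝ))
        ((4*δ^3*c*Q, 6*δ^5*P, 4*δ^3) : ℝ×ℝ×ℝ) δ := hψ1.prodMk (hψ2.prodMk hψ3)
    have hFψ : HasDerivAt (fun s : ℝ => f (s^4*c*Q) (s^6*P) (s^4))
        (fderiv ℝ (fun v : ℝ × ℝ × ℝ => f v.1 v.2.1 v.2.2) ((δ^4*c*Q, δ^6*P, δ^4) : ℝ×ℝ×ℝ)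
          ((4*δ^3*c*Q, 6*δ^5*P, 4*δ^3) : ℝ×ℝ×ℝ)) δ :=
      by have := hF.hasFDerivAt.comp_hasDerivAt δ hψ; exact this
    have hw : fderiv ℝ (fun v : ℝ × ℝ × ℝ => f v.1 v.2.1 v.2.2)
        ((δ^4*c*Q, δ^6*P, δ^4) : ℝ×ℝ×ℝ) ((4*δ^3*c*Q, 6*δ^5*P, 4*δ^3) : ℝ×ℝ×ℝ)
        = 4*δ^3*c*Q*d₁ + 6*δ^5*P*d₂ + 4*δ^3*d₃ :=
      fderiv3_apply f (δ^4*c*Q) (δ^6*P) (δ^4) hF _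
    rw [hw] at hFψ
    have hinv : HasDerivAt (fun s : ℝ => (s^8)⁻¹) (-(8*δ^7)/(δ^8)^2) δ := by
      have h := (hasDerivAt_pow 8 δ).inv (pow_ne_zero 8 hδ)
      have e : -(8*δ^7)/(δ^8)^2 = -((8:ℕ) * δ^(8-1))/(δ^8)^2 := by norm_num
      rw [e]; exact h
    have hx3 : HasDerivAt (fun s : ℝ => (s^8)⁻¹ * f (s^4*c*Q) (s^6*P) (s^4))
        (-(8*δ^7)/(δ^8)^2 * f (δ^4*c*Q) (δ^6*P) (δ^4)
          + (δ^8)⁻¹ * (4*δ^3*c*Q*d₁ + 6*δ^5*P*d₂ + 4*δ^3*d₃)) δ := hinv.mul hFψ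
    have hev : (fun t => g (Q, P, t))
        =ᶠ[nhds δ] (fun s : ℝ => (s^8)⁻¹ * f (s^4*c*Q) (s^6*P) (s^4)) := by
      filter_upwards [isOpen_ne.mem_nhds hδ] with s hs
      exact hg Q P s hs
    have ht3 : L (0,0,1) = -(8*δ^7)/(δ^8)^2 * f (δ^4*c*Q) (δ^6*P) (δ^4)
        + (δ^8)⁻¹ * (4*δ^3*c*Q*d₁ + 6*δ^5*P*d₂ + 4*δ^3*d₃) :=
      hc3.unique (hx3.congr_of_eventuallyEq hev)
    -- now bound the three components
    have hb1 : |d₁| ≤ Cq*D*|δ|^6 := hd1b Q P δ hQb hPb hδb hδ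
    have hb2 : |d₂| ≤ Cp*K*|δ|^4 := hd2b Q P δ hQb hPb hδb hδ
    have hb3 : |d₃| ≤ Ce*D*|δ|^6 := hd3b Q P δ hQb hPb hδb hδ
    have hbf : |f (δ^4*c*Q) (δ^6*P) (δ^4)| ≤ CC*|δ|^10 := hfzb Q P δ hQb hPb hδb hδ
    have habs8 : |δ^8| = |δ|^8 := abs_pow δ 8
    have e1b : |L (1,0,0)| ≤ c*Cq*D*|δ| := by
      rw [ht1, abs_mul, abs_inv, habs8, abs_mul, abs_mul, abs_pow, abs_of_pos hc]
      rw [inv_mul_le_iff₀ (by positivity)]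
      calc |d₁| * (|δ|^4*c) ≤ (Cq*D*|δ|^6) * (|δ|^4*c) := by
            exact mul_le_mul_of_nonneg_right hb1 (by positivity)
        _ = (c*Cq*D)*|δ|^10 := by ring
        _ ≤ (c*Cq*D)*|δ|^9 := by
            exact mul_le_mul_of_nonneg_left
              (pow_le_pow_of_le_one ha0.le ha1 (by norm_num)) (by positivity)
        _ = |δ|^8 * (c*Cq*D*|δ|) := by ring
    have e2b : |L (0,1,0)| ≤ Cp*K*|δ| := by
      rw [ht2, abs_mul, abs_inv, habs8, abs_mul, abs_pow]
      rw [inv_mul_le_iff₀ (by positivity)]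
      calc |d₂| * |δ|^6 ≤ (Cp*K*|δ|^4) * |δ|^6 := by
            exact mul_le_mul_of_nonneg_right hb2 (by positivity)
        _ = (Cp*K)*|δ|^10 := by ring
        _ ≤ (Cp*K)*|δ|^9 := by
            exact mul_le_mul_of_nonneg_left
              (pow_le_pow_of_le_one ha0.le ha1 (by norm_num)) (by positivity)
        _ = |δ|^8 * (Cp*K*|δ|) := by ring
    have e3b : |L (0,0,1)| ≤ (8*CC + 4*c*B*Cq*D + 6*B*Cp*K + 4*Ce*D)*|δ| := by
      rw [ht3]
      have hA : |(-(8*δ^7)/(δ^8)^2) * f (δ^4*c*Q) (δ^6*P) (δ^4)| ≤ 8*CC*|δ| := by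
        rw [abs_mul, abs_div, abs_neg, abs_mul, abs_pow, abs_pow, habs8]
        rw [div_mul_eq_mul_div, div_le_iff₀ (by positivity)]
        calc |(8:ℝ)| * |δ|^7 * |f (δ^4*c*Q) (δ^6*P) (δ^4)|
            ≤ |(8:ℝ)| * |δ|^7 * (CC*|δ|^10) := by
              exact mul_le_mul_of_nonneg_left hbf (by positivity)
          _ = 8*CC*|δ| * (|δ|^8)^2 := by
              rw [show |(8:ℝ)| = 8 by norm_num]; ring
      have hB2 : |(δ^8)⁻¹ * (4*δ^3*c*Q*d₁ + 6*δ^5*P*d₂ + 4*δ^3*d₃)|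
          ≤ (4*c*B*Cq*D + 6*B*Cp*K + 4*Ce*D)*|δ| := by
        rw [abs_mul, abs_inv, habs8]
        rw [inv_mul_le_iff₀ (by positivity)]
        have hterm1 : |4*δ^3*c*Q*d₁| ≤ 4*c*B*Cq*D*|δ|^9 := by
          rw [abs_mul, abs_mul, abs_mul, abs_mul, abs_pow, abs_of_pos hc,
            show |(4:ℝ)| = 4 by norm_num]
          calc 4*|δ|^3*c*|Q| * |d₁| ≤ 4*|δ|^3*c*B*(Cq*D*|δ|^6) := by
                have h1 : 4*|δ|^3*c*|Q| ≤ 4*|δ|^3*c*B := by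
                  exact mul_le_mul_of_nonneg_left hQb (by positivity)
                exact mul_le_mul h1 hb1 (abs_nonneg _) (by positivity)
            _ = 4*c*B*Cq*D*|δ|^9 := by ring
        have hterm2 : |6*δ^5*P*d₂| ≤ 6*B*Cp*K*|δ|^9 := by
          rw [abs_mul, abs_mul, abs_mul, abs_pow, show |(6:ℝ)| = 6 by norm_num]
          calc 6*|δ|^5*|P| * |d₂| ≤ 6*|δ|^5*B*(Cp*K*|δ|^4) := by
                have h1 : 6*|δ|^5*|P| ≤ 6*|δ|^5*B := by
                  exact mul_le_mul_of_nonneg_left hPb (by positivity)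
                exact mul_le_mul h1 hb2 (abs_nonneg _) (by positivity)
            _ = 6*B*Cp*K*|δ|^9 := by ring
        have hterm3 : |4*δ^3*d₃| ≤ 4*Ce*D*|δ|^9 := by
          rw [abs_mul, abs_mul, abs_pow, show |(4:ℝ)| = 4 by norm_num]
          calc 4*|δ|^3 * |d₃| ≤ 4*|δ|^3*(Ce*D*|δ|^6) := by
                exact mul_le_mul_of_nonneg_left hb3 (by positivity)
            _ = 4*Ce*D*|δ|^9 := by ring
        calc |4*δ^3*c*Q*d₁ + 6*δ^5*P*d₂ + 4*δ^3*d₃|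
            ≤ |4*δ^3*c*Q*d₁ + 6*δ^5*P*d₂| + |4*δ^3*d₃| := abs_add_le _ _
          _ ≤ |4*δ^3*c*Q*d₁| + |6*δ^5*P*d₂| + |4*δ^3*d₃| := by
              have := abs_add_le (4*δ^3*c*Q*d₁) (6*δ^5*P*d₂)
              linarith
          _ ≤ 4*c*B*Cq*D*|δ|^9 + 6*B*Cp*K*|δ|^9 + 4*Ce*D*|δ|^9 := by
              linarith
          _ = |δ|^8 * ((4*c*B*Cq*D + 6*B*Cp*K + 4*Ce*D)*|δ|) := by ring
      calc |(-(8*δ^7)/(δ^8)^2) * f (δ^4*c*Q) (δ^6*P) (δ^4)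
            + (δ^8)⁻¹ * (4*δ^3*c*Q*d₁ + 6*δ^5*P*d₂ + 4*δ^3*d₃)|
          ≤ |(-(8*δ^7)/(δ^8)^2) * f (δ^4*c*Q) (δ^6*P) (δ^4)|
            + |(δ^8)⁻¹ * (4*δ^3*c*Q*d₁ + 6*δ^5*P*d₂ + 4*δ^3*d₃)| := abs_add_le _ _
        _ ≤ 8*CC*|δ| + (4*c*B*Cq*D + 6*B*Cp*K + 4*Ce*D)*|δ| := add_le_add hA hB2
        _ = (8*CC + 4*c*B*Cq*D + 6*B*Cp*K + 4*Ce*D)*|δ| := by ring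
    calc ‖L‖ ≤ ‖L (1,0,0)‖ + ‖L (0,1,0)‖ + ‖L (0,0,1)‖ := opNorm3_le L
      _ = |L (1,0,0)| + |L (0,1,0)| + |L (0,0,1)| := by
          rw [Real.norm_eq_abs, Real.norm_eq_abs, Real.norm_eq_abs]
      _ ≤ c*Cq*D*|δ| + Cp*K*|δ| + (8*CC + 4*c*B*Cq*D + 6*B*Cp*K + 4*Ce*D)*|δ| := by
          linarith
      _ = KK * |δ| := by rw [hKKdef]; ring
  -- differentiability on U
  have hgdiffU : DifferentiableOn ℝ g U := by
    intro y hy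
    by_cases h0 : y.2.2 = 0
    · exact (hd0 y hy h0).differentiableAt.differentiableWithinAt
    · exact (hgVdiff y ⟨hy, h0⟩).differentiableWithinAt
  -- continuity of the derivative on U
  have hcont : ContinuousOn (fderiv ℝ g) U := by
    intro y hy
    by_cases h0 : y.2.2 = 0
    · have hy0 : fderiv ℝ g y = 0 := (hd0 y hy h0).fderiv
      have hbd : ∀ x ∈ U, ‖fderiv ℝ g x‖ ≤ KK * ‖x - y‖ := by
        intro x hx
        by_cases hx0 : x.2.2 = 0
        · rw [(hd0 x hx hx0).fderiv]
          simp only [norm_zero]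
          positivity
        · refine (hLbound x ⟨hx, hx0⟩).trans ?_
          have h1 : |x.2.2| = |(x - y).2.2| := by
            rw [show (x - y).2.2 = x.2.2 - y.2.2 from rfl, h0, sub_zero]
          have h2 : |x.2.2| ≤ ‖x - y‖ := by
            rw [h1, ← Real.norm_eq_abs]
            exact (norm_snd_le (x-y).2).trans (norm_snd_le (x-y))
          exact mul_le_mul_of_nonneg_left h2 hKK0.le
      show Filter.Tendsto (fderiv ℝ g) (nhdsWithin y U) (nhds (fderiv ℝ g y))
      rw [hy0]
      have hcont2 : Filter.Tendsto (fun x : ℝ×ℝ×ℝ => KK * ‖x - y‖)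
          (nhds y) (nhds 0) := by
        have hcnt : Continuous (fun x : ℝ×ℝ×ℝ => KK * ‖x - y‖) := by fun_prop
        have h := hcnt.tendsto y
        simpa using h
      have hev' : ∀ᶠ x in nhdsWithin y U,
          ‖fderiv ℝ g x‖ ≤ (fun x : ℝ×ℝ×ℝ => KK * ‖x - y‖) x := by
        filter_upwards [self_mem_nhdsWithin] with x hx using hbd x hx
      exact squeeze_zero_norm' hev' (hcont2.mono_left nhdsWithin_le_nhds)
    · have hcV : ContinuousOn (fderiv ℝ g) V :=
        hgV.continuousOn_fderiv_of_isOpen hVopen le_rfl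
      exact (hcV.continuousAt (hVopen.mem_nhds ⟨hy, h0⟩)).continuousWithinAt
  -- g is C¹ on U
  have hC1U : ContDiffOn ℝ 1 g U := by
    rw [show (1 : WithTop ℕ∞) = 0 + 1 by rw [zero_add],
      contDiffOn_succ_iff_fderiv_of_isOpen hUopen]
    refine ⟨hgdiffU, ?_, contDiffOn_zero.2 hcont⟩
    intro h
    simp at h
  have hsub : Set.Icc (-M) M ×ˢ Set.Icc (-M) M ×ˢ Set.Ioo (-δ₀) δ₀ ⊆ U := by
    refine Set.prod_mono (Set.Icc_subset_Ioo ?_ ?_)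
      (Set.prod_mono (Set.Icc_subset_Ioo ?_ ?_) subset_rfl) <;>
      simp only [hBdef] <;> linarith
  refine ⟨δ₀, hδ₀0, hC1U.mono hsub, fun Q P hQ hP => ?_⟩
  obtain ⟨hQ1, hQ2⟩ := abs_le.1 hQ
  obtain ⟨hP1, hP2⟩ := abs_le.1 hP
  have hmem : ((Q, P, 0) : ℝ×ℝ×ℝ) ∈ U := by
    refine ⟨⟨?_, ?_⟩, ⟨?_, ?_⟩, ?_, ?_⟩
    · simp only [hBdef]; linarith
    · simp only [hBdef]; linarith
    · simp only [hBdef]; linarith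
    · simp only [hBdef]; linarith
    · show -δ₀ < (0:ℝ)
      linarith
    · show (0:ℝ) < δ₀
      exact hδ₀0
  exact (hd0 (Q, P, 0) hmem rfl).fderiv
end
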